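/- Landen's identity for the Weierstrass function: ℘(z, τ/2) = ℘(z, τ) + ℘(z + τ/2, τ) − ℘(τ/2, τ), for z not in the lattice ℤ + (τ/2)ℤ. -/

import Mathlib

/-!
The lattice `ℤ + (τ/2)ℤ` is the disjoint union of `ℤ + τℤ` (even multiples of `τ/2`) and its
translate by `τ/2` (odd multiples). Splitting the absolutely convergent series for `℘(z, τ/2)`
along this decomposition, the even terms are exactly the terms of `℘(z, τ)`, and each odd term
`1/(z + ω + τ/2)² − 1/(ω + τ/2)²` is the difference of the terms of `℘(z + τ/2, τ)` and
`℘(τ/2, τ)` at `ω`, the normalising constants `1/ω²` cancelling.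
-/

open Complex

noncomputable section

/-- The Weierstrass ℘-function for the lattice `ℤ + τℤ`:
`℘(z,τ) = 1/z² + ∑_{(m,n)≠(0,0)} (1/(z+m+nτ)² − 1/(m+nτ)²)`. -/
def wpT (τ z : ℂ) : ℂ :=
  1 / z ^ 2 + ∑' p : {p : ℤ × ℤ // p ≠ 0},
    (1 / (z + (p.1.1 : ℂ) + (p.1.2 : ℂ) * τ) ^ 2 - 1 / ((p.1.1 : ℂ) + (p.1.2 : ℂ) * τ) ^ 2)

theorem HasSum.even_add_odd_snd {M β : Type*} [AddCommMonoid M] [TopologicalSpace M]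
    [ContinuousAdd M] {f : β × ℤ → M} {a b : M}
    (he : HasSum (fun p : β × ℤ ↦ f (p.1, 2 * p.2)) a)
    (ho : HasSum (fun p : β × ℤ ↦ f (p.1, 2 * p.2 + 1)) b) :
    HasSum f (a + b) := by
  have hinj_even : Function.Injective fun p : β × ℤ ↦ (p.1, 2 * p.2) :=
    fun p q h ↦ by simp_all [Prod.ext_iff]
  have hinj_odd : Function.Injective fun p : β × ℤ ↦ (p.1, 2 * p.2 + 1) :=
    fun p q h ↦ by simp_all [Prod.ext_iff]
  have h_even : Set.range (fun p : β × ℤ ↦ (p.1, 2 * p.2)) = Prod.snd ⁻¹' {n | Even n} := by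
    ext ⟨m, n⟩
    simp [even_iff_exists_two_mul, eq_comm]
  have h_odd : Set.range (fun p : β × ℤ ↦ (p.1, 2 * p.2 + 1)) = Prod.snd ⁻¹' {n | Odd n} := by
    ext ⟨m, n⟩
    simp [Odd, eq_comm]
  refine (hinj_even.hasSum_range_iff.2 he).add_isCompl ?_ (hinj_odd.hasSum_range_iff.2 ho)
  rw [h_even, h_odd]
  exact Int.isCompl_even_odd.preimage Prod.snd

theorem linearIndependent_one_of_im_ne_zero {τ : ℂ} (hτ : τ.im ≠ 0) :
    LinearIndependent ℝ ![1, τ] := by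
  refine LinearIndependent.pair_iff.2 fun s t h ↦ ?_
  have ht : t = 0 := by simpa [hτ] using congrArg Complex.im h
  simp_all

def wpSummand (τ z : ℂ) (q : ℤ × ℤ) : ℂ :=
  1 / (z + q.1 + q.2 * τ) ^ 2 - 1 / (q.1 + q.2 * τ) ^ 2

theorem summable_wpSummand {τ : ℂ} (hτ : τ.im ≠ 0) (z : ℂ) : Summable (wpSummand τ z) := by
  let L : PeriodPair := ⟨1, τ, linearIndependent_one_of_im_ne_zero hτ⟩
  refine (L.latticeEquivProd.symm.toEquiv.summable_iff.2
    (L.hasSum_weierstrassP (-z)).summable).congr fun q ↦ ?_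
  simp only [Function.comp_apply, LinearEquiv.coe_toEquiv, L.latticeEquiv_symm_apply, wpSummand]
  ring

theorem hasSum_wpSummand {τ : ℂ} (hτ : τ.im ≠ 0) (z : ℂ) : HasSum (wpSummand τ z) (wpT τ z) := by
  have h_zero := hasSum_unique (wpSummand τ z ∘ (↑) : ({0} : Set (ℤ × ℤ)) → ℂ)
  convert h_zero.add_compl ((summable_wpSummand hτ z).subtype _).hasSum using 1
  simp [wpT, wpSummand]
  rfl

theorem wpSummand_half_even (τ z : ℂ) (m n : ℤ) :
    wpSummand (τ / 2) z (m, 2 * n) = wpSummand τ z (m, n) := by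
  simp only [wpSummand]
  push_cast
  ring

theorem wpSummand_half_odd (τ z : ℂ) (m n : ℤ) :
    wpSummand (τ / 2) z (m, 2 * n + 1) =
      wpSummand τ (z + τ / 2) (m, n) - wpSummand τ (τ / 2) (m, n) := by
  simp only [wpSummand]
  push_cast
  ring

theorem landen_wp_general (τ z : ℂ) (hτ : 0 < τ.im) :
    wpT (τ / 2) z = wpT τ z + wpT τ (z + τ / 2) - wpT τ (τ / 2) := by
  have hτ₀ : τ.im ≠ 0 := hτ.ne'
  have hτ₂ : (τ / 2).im ≠ 0 := by simpa using hτ₀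
  have h_split : HasSum (wpSummand (τ / 2) z) (wpT τ z + (wpT τ (z + τ / 2) - wpT τ (τ / 2))) :=
    HasSum.even_add_odd_snd
      (by simpa only [wpSummand_half_even] using hasSum_wpSummand hτ₀ z)
      (by simpa only [wpSummand_half_odd] using
        (hasSum_wpSummand hτ₀ (z + τ / 2)).sub (hasSum_wpSummand hτ₀ (τ / 2)))
  rw [(hasSum_wpSummand hτ₂ z).unique h_split]
  ring

/-- Landen's identity for the Weierstrass function:
`℘(z, τ/2) = ℘(z, τ) + ℘(z + τ/2, τ) − ℘(τ/2, τ)` for `z ∉ ℤ + (τ/2)ℤ`. -/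
theorem landen_wp (τ z : ℂ) (hτ : 0 < τ.im)
    (hz : ∀ m n : ℤ, z ≠ (m : ℂ) + (n : ℂ) * τ / 2) :
    wpT (τ / 2) z = wpT τ z + wpT τ (z + τ / 2) - wpT τ (τ / 2) :=
  landen_wp_general τ z hτ
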